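/- Let a, b be odd coprime integers and ε ∈ {±1}, and consider the triple L(ε,a,b) = (L_a, −ε·L_{a+εb}, L_b), a solution of x₁² − x₂² + x₃² + x₁x₂x₃ = 4. Then the three mutations of this solution are again of the same form: mutation in the first coordinate yields L(ε, −a−2εb, b), mutation in the second yields L(−ε, a, b), and mutation in the third yields L(ε, a, −b−2εa). Explicitly, −L_a·L_b·(−ε L_{a+εb}) − L_a = L_{−a−2εb} in the first case, x₁x₃ − x₂ with sign conventions gives ε·L_{a−εb} in the second, and similarly L_{−b−2εa} in the third. -/

import Mathlib

/-- Fibonacci numbers extended to all integer indices. -/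
def fibZ : ℤ → ℤ
  | Int.ofNat n => Nat.fib n
  | Int.negSucc n => (-1) ^ n * Nat.fib (n + 1)

/-- Lucas numbers extended to all integer indices: `L_n = F_{n−1} + F_{n+1}`. -/
def lucZ (n : ℤ) : ℤ := fibZ (n - 1) + fibZ (n + 1)

/-! Binet's formula `L_n = φ ^ n + ψ ^ n`, together with `φ ψ = -1`, gives the product rule
`L_m L_n = L_{m+n} + (-1)^n L_{m-n}` for all integers `m, n`. For odd `b` and `ε = ±1` it yields
`ε L_{a+εb} L_b = L_{a+2εb} - L_a` and `ε L_a L_b = L_{a+εb} - L_{a-εb}`, which are the first two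
mutations once `L_{-n} = -L_n` is used at the odd index `a + 2εb`. The third mutation is the first
one with `a` and `b` exchanged, because `L` is even at the even index `a + εb`. -/

open Real goldenRatio

theorem fibZ_eq_intFib : fibZ = Int.fib := by
  funext n
  cases n with
  | ofNat k => rfl
  | negSucc k =>
    show (-1) ^ k * (Nat.fib (k + 1) : ℤ) = Int.fib (Int.negSucc k)
    rw [Int.negSucc_eq, ← Nat.cast_succ, Int.fib_neg_natCast, pow_succ, pow_succ]
    ring

theorem lucZ_eq_binet (n : ℤ) : (lucZ n : ℝ) = φ ^ n + ψ ^ n := by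
  have h5 : √5 ≠ 0 := by positivity
  rw [lucZ, fibZ_eq_intFib, Int.cast_add, coe_intFib_eq, coe_intFib_eq,
    zpow_sub_one₀ goldenRatio_ne_zero, zpow_sub_one₀ goldenConj_ne_zero,
    zpow_add_one₀ goldenRatio_ne_zero, zpow_add_one₀ goldenConj_ne_zero,
    inv_goldenRatio, inv_goldenConj, ← add_div, div_eq_iff h5, ← goldenRatio_sub_goldenConj]
  ring

theorem lucZ_mul_lucZ (m n : ℤ) :
    lucZ m * lucZ n = lucZ (m + n) + n.negOnePow * lucZ (m - n) := by
  have hφ := goldenRatio_ne_zero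
  have hψ := goldenConj_ne_zero
  have hφm : φ ^ m = φ ^ (m - n) * φ ^ n := by rw [← zpow_add₀ hφ, sub_add_cancel]
  have hψm : ψ ^ m = ψ ^ (m - n) * ψ ^ n := by rw [← zpow_add₀ hψ, sub_add_cancel]
  have hsign : (-1 : ℝ) ^ n = φ ^ n * ψ ^ n := by rw [← mul_zpow, goldenRatio_mul_goldenConj]
  apply Int.cast_injective (α := ℝ)
  push_cast
  rw [Int.cast_negOnePow, lucZ_eq_binet, lucZ_eq_binet, lucZ_eq_binet, lucZ_eq_binet,
    zpow_add₀ hφ, zpow_add₀ hψ, hsign, hφm, hψm]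
  ring

theorem lucZ_zero : lucZ 0 = 2 := rfl

theorem lucZ_neg (n : ℤ) : lucZ (-n) = n.negOnePow * lucZ n := by
  have h := lucZ_mul_lucZ 0 n
  rw [lucZ_zero, zero_add, zero_sub] at h
  have hsq : (n.negOnePow : ℤ) * n.negOnePow = 1 := by
    rw [← Units.val_mul, Int.units_mul_self, Units.val_one]
  linear_combination -(n.negOnePow : ℤ) * h - lucZ (-n) * hsq

theorem lucZ_neg_of_odd {n : ℤ} (hn : Odd n) : lucZ (-n) = -lucZ n := by
  simp [lucZ_neg, Int.negOnePow_odd _ hn]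

theorem lucZ_neg_of_even {n : ℤ} (hn : Even n) : lucZ (-n) = lucZ n := by
  simp [lucZ_neg, Int.negOnePow_even _ hn]

theorem lucZ_mul_lucZ_of_odd (m : ℤ) {n : ℤ} (hn : Odd n) :
    lucZ m * lucZ n = lucZ (m + n) - lucZ (m - n) := by
  simp [lucZ_mul_lucZ, Int.negOnePow_odd _ hn, sub_eq_add_neg]

section Sign

variable {ε : ℤ} (hε : ε = 1 ∨ ε = -1)
include hε

theorem odd_of_eq_one_or_eq_neg_one : Odd ε := by
  rcases hε with rfl | rfl <;> decide

theorem lucZ_sign_mul_of_odd {n : ℤ} (hn : Odd n) : lucZ (ε * n) = ε * lucZ n := by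
  rcases hε with rfl | rfl
  · simp
  · simp [lucZ_neg_of_odd hn]

theorem lucZ_add_sign_mul_comm {a b : ℤ} (ha : Odd a) (hb : Odd b) :
    lucZ (a + ε * b) = lucZ (b + ε * a) := by
  rcases hε with rfl | rfl
  · rw [one_mul, one_mul, add_comm]
  · have hba : Even (b + -1 * a) := by
      obtain ⟨x, rfl⟩ := ha
      obtain ⟨y, rfl⟩ := hb
      exact ⟨y - x, by ring⟩
    rw [← lucZ_neg_of_even hba]
    congr 1
    ring

theorem lucZ_mutation_fst {a b : ℤ} (ha : Odd a) (hb : Odd b) :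
    (-ε * lucZ (a + ε * b)) * lucZ b - lucZ a = lucZ (-a - 2 * ε * b) := by
  have key := lucZ_mul_lucZ_of_odd (a + ε * b) ((odd_of_eq_one_or_eq_neg_one hε).mul hb)
  rw [lucZ_sign_mul_of_odd hε hb, add_sub_cancel_right] at key
  have hneg : lucZ (-a - 2 * ε * b) = -lucZ (a + ε * b + ε * b) := by
    have hodd : Odd (a + ε * b + ε * b) := by
      rw [add_assoc]
      exact ha.add_even ⟨ε * b, rfl⟩
    rw [← lucZ_neg_of_odd hodd]
    congr 1
    ring
  linear_combination -key - hneg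

theorem lucZ_mutation_snd (a : ℤ) {b : ℤ} (hb : Odd b) :
    -(lucZ a * lucZ b) - (-ε * lucZ (a + ε * b)) = ε * lucZ (a - ε * b) := by
  have key := lucZ_mul_lucZ_of_odd a ((odd_of_eq_one_or_eq_neg_one hε).mul hb)
  rw [lucZ_sign_mul_of_odd hε hb] at key
  have hε2 : ε * ε = 1 := by rcases hε with rfl | rfl <;> rfl
  linear_combination -ε * key + lucZ a * lucZ b * hε2

end Sign

theorem stmt16_general (a b ε : ℤ) (ha : Odd a) (hb : Odd b)
    (hε : ε = 1 ∨ ε = -1) :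
    (-ε * lucZ (a + ε * b)) * lucZ b - lucZ a = lucZ (-a - 2 * ε * b) ∧
    -(lucZ a * lucZ b) - (-ε * lucZ (a + ε * b)) = ε * lucZ (a - ε * b) ∧
    lucZ a * (-ε * lucZ (a + ε * b)) - lucZ b = lucZ (-b - 2 * ε * a) := by
  refine ⟨lucZ_mutation_fst hε ha hb, lucZ_mutation_snd hε a hb, ?_⟩
  rw [lucZ_add_sign_mul_comm hε ha hb, mul_comm (lucZ a)]
  exact lucZ_mutation_fst hε hb ha

/-- the three mutations of the solution
`L(ε,a,b) = (L_a, −ε·L_{a+εb}, L_b)` of `x₁² − x₂² + x₃² − x₁x₂x₃ = −4`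
are again of the same form:
mutation in the first coordinate (`x̂₁ = x₂x₃ − x₁`) yields `L(ε, −a−2εb, b)`,
mutation in the second (`x̂₂ = −x₁x₃ − x₂`) yields `L(−ε, a, b)`,
i.e. equals `ε·L_{a−εb}`, and mutation in the third (`x̂₃ = x₁x₂ − x₃`)
yields `L(ε, a, −b−2εa)`. -/
theorem stmt16 (a b ε : ℤ) (ha : Odd a) (hb : Odd b) (hab : IsCoprime a b)
    (hε : ε = 1 ∨ ε = -1) :
    (-ε * lucZ (a + ε * b)) * lucZ b - lucZ a = lucZ (-a - 2 * ε * b) ∧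
    -(lucZ a * lucZ b) - (-ε * lucZ (a + ε * b)) = ε * lucZ (a - ε * b) ∧
    lucZ a * (-ε * lucZ (a + ε * b)) - lucZ b = lucZ (-b - 2 * ε * a) :=
  stmt16_general a b ε ha hb hε
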